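/- arXiv:0807.1598 — 3 statements merged into one kernel-verified Lean document; each statement's English description precedes it below -/
import Mathlib

section
/- For a convex function f : ℝⁿ → ℝ and integer 0 ≤ k ≤ n, the set Σ_k(f) = {x ∈ ℝⁿ : dim ∂f(x) ≥ k} has Hausdorff dimension at most n - k. -/
/-!
The subgradients form a monotone relation: if `u` represents a subgradient at `x` and `v` one at
`y`, then `⟪x - y, u - v⟫ ≥ 0`. By Minty's trick, `(x, u) ↦ x + u` therefore has a 1-Lipschitz
inverse on its image, so the base points over any set `A` form a set of dimension at most
`dimH A`. If `dim ∂f(x) ≥ k`, some `k` coordinates map the convex set `x + ∂f(x)` (subgradients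
taken as vectors) onto a set with nonempty interior, so it meets one of countably many rational
affine planes of codimension `≥ k`. Hence `Σ_k(f)` is a countable union of sets of dimension at
most `n - k`.
-/

open Module
open scoped ENNReal

open Set Function InnerProductSpace
open scoped RealInnerProductSpace

theorem dimH_image_le_of_edist_le {α X Y : Type*} [EMetricSpace X] [EMetricSpace Y]
    {f : α → X} {g : α → Y} {s : Set α}
    (hfg : ∀ p ∈ s, ∀ q ∈ s, edist (f p) (f q) ≤ edist (g p) (g q)) :
    dimH (f '' s) ≤ dimH (g '' s) := by
  rcases s.eq_empty_or_nonempty with rfl | ⟨p₀, -⟩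
  · simp
  have : Nonempty α := ⟨p₀⟩
  have hf_inv : ∀ p ∈ s, f (invFunOn g s (g p)) = f p := fun p hp =>
    edist_le_zero.1 <| (hfg _ (invFunOn_mem ⟨p, hp, rfl⟩) p hp).trans <| by
      rw [invFunOn_eq (f := g) ⟨p, hp, rfl⟩, edist_self]
  have hlip : LipschitzOnWith 1 (f ∘ invFunOn g s) (g '' s) := by
    rintro _ ⟨p, hp, rfl⟩ _ ⟨q, hq, rfl⟩
    simpa [hf_inv p hp, hf_inv q hq] using hfg p hp q hq
  calc dimH (f '' s) = dimH ((f ∘ invFunOn g s) '' (g '' s)) := by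
        rw [image_image]; exact congrArg dimH (image_congr fun p hp => (hf_inv p hp).symm)
    _ ≤ dimH (g '' s) := hlip.dimH_image_le

theorem dimH_preimage_singleton_le_finrank_ker {E F : Type*} [NormedAddCommGroup E]
    [NormedSpace ℝ E] [FiniteDimensional ℝ E] [AddCommGroup F] [Module ℝ F]
    (π : E →ₗ[ℝ] F) (z : F) : dimH (π ⁻¹' {z}) ≤ finrank ℝ (LinearMap.ker π) := by
  rcases (π ⁻¹' {z}).eq_empty_or_nonempty with h | ⟨c, hc⟩
  · simp [h]
  have hsub : π ⁻¹' {z} ⊆ range fun v : LinearMap.ker π => c + v := fun y hy =>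
    ⟨⟨y - c, by simp_all [LinearMap.mem_ker]⟩, add_sub_cancel c y⟩
  refine (dimH_mono hsub).trans (ContDiff.dimH_range_le ?_)
  exact contDiff_const.add (LinearMap.ker π).subtypeL.contDiff

section InnerProduct

variable {E : Type*} [NormedAddCommGroup E] [InnerProductSpace ℝ E]

theorem norm_le_norm_add_of_inner_nonneg {x y : E} (h : 0 ≤ ⟪x, y⟫) : ‖x‖ ≤ ‖x + y‖ := by
  refine (pow_le_pow_iff_left₀ (norm_nonneg _) (norm_nonneg _) two_ne_zero).1 ?_
  rw [norm_add_sq_real]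
  nlinarith [sq_nonneg ‖y‖]

theorem dimH_fst_le_of_monotone {G : Set (E × E)}
    (hG : ∀ p ∈ G, ∀ q ∈ G, 0 ≤ ⟪p.1 - q.1, p.2 - q.2⟫) (A : Set E) :
    dimH (Prod.fst '' {p ∈ G | p.1 + p.2 ∈ A}) ≤ dimH A := by
  refine (dimH_image_le_of_edist_le fun p hp q hq => ?_).trans
    (dimH_mono (image_subset_iff.2 fun p hp => hp.2))
  rw [edist_dist, edist_dist, dist_eq_norm, dist_eq_norm, add_sub_add_comm]
  exact ENNReal.ofReal_le_ofReal (norm_le_norm_add_of_inner_nonneg (hG p hp.1 q hq.1))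

def subdifferential (f : E → ℝ) (x : E) : Set (StrongDual ℝ E) :=
  {ℓ | ∀ y, f x + ℓ (y - x) ≤ f y}

theorem convex_subdifferential (f : E → ℝ) (x : E) : Convex ℝ (subdifferential f x) := by
  intro ℓ₁ h₁ ℓ₂ h₂ a b ha hb hab y
  have := add_le_add (mul_le_mul_of_nonneg_left (h₁ y) ha) (mul_le_mul_of_nonneg_left (h₂ y) hb)
  have hfx : f x = a * f x + b * f x := by rw [← add_mul, hab, one_mul]
  have hfy : f y = a * f y + b * f y := by rw [← add_mul, hab, one_mul]
  simp only [add_apply, smul_apply, smul_eq_mul]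
  linarith

def subgradientGraph (f : E → ℝ) : Set (E × E) :=
  {p | ∀ y, f p.1 + ⟪p.2, y - p.1⟫ ≤ f y}

theorem inner_sub_sub_nonneg_of_mem_subgradientGraph {f : E → ℝ} {p q : E × E}
    (hp : p ∈ subgradientGraph f) (hq : q ∈ subgradientGraph f) :
    0 ≤ ⟪p.1 - q.1, p.2 - q.2⟫ := by
  have h₁ := hp q.1
  have h₂ := hq p.1
  rw [← neg_sub, inner_neg_right] at h₁
  rw [real_inner_comm, inner_sub_left]
  linarith

end InnerProduct

section Coordinates

variable {ι K E : Type*} [Fintype ι] [Field K] [AddCommGroup E] [Module K E]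

noncomputable def Module.Basis.restrictCoords (b : Basis ι K E) (S : Finset ι) :
    E →ₗ[K] (S → K) :=
  LinearMap.funLeft K K ((↑) : S → ι) ∘ₗ b.equivFun.toLinearMap

theorem Module.Basis.restrictCoords_apply (b : Basis ι K E) (S : Finset ι) (x : E) (i : S) :
    b.restrictCoords S x i = b.repr x i := rfl

theorem Module.Basis.restrictCoords_surjective (b : Basis ι K E) (S : Finset ι) :
    Surjective (b.restrictCoords S) :=
  (LinearMap.funLeft_surjective_of_injective K K _ Subtype.val_injective).comp b.equivFun.surjective

theorem Module.Basis.finrank_ker_restrictCoords (b : Basis ι K E) (S : Finset ι) :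
    finrank K (LinearMap.ker (b.restrictCoords S)) = Fintype.card ι - S.card := by
  have := Module.Finite.of_basis b
  have := LinearMap.finrank_range_add_finrank_ker (b.restrictCoords S)
  rw [LinearMap.range_eq_top.2 (b.restrictCoords_surjective S), finrank_top,
    finrank_fintype_fun_eq_card, Fintype.card_coe, finrank_eq_card_basis b] at this
  omega

theorem Module.Basis.exists_finrank_le_card_map_restrictCoords_eq_top (b : Basis ι K E)
    (W : Submodule K E) :
    ∃ S : Finset ι, finrank K W ≤ S.card ∧ W.map (b.restrictCoords S) = ⊤ := by
  classical
  have := Module.Finite.of_basis b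
  -- The images of the basis vectors indexed by `T` form a basis of `E ⧸ W`, so the coordinates
  -- outside `T` can be prescribed freely on `W`.
  obtain ⟨T, -, -, hT_span, hT_indep⟩ := exists_linearIndepOn_extension (v := W.mkQ ∘ b)
    (linearIndepOn_empty K _) (empty_subset univ)
  refine ⟨Tᶜ.toFinset, ?_, eq_top_iff.2 fun z _ => ?_⟩
  · have hT_card : T.toFinset.card ≤ finrank K (E ⧸ W) := by
      rw [Set.toFinset_card]
      exact hT_indep.linearIndependent.fintype_card_le_finrank
    have := W.finrank_quotient_add_finrank
    rw [Set.toFinset_compl, Finset.card_compl, ← finrank_eq_card_basis b]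
    omega
  obtain ⟨y, rfl⟩ := b.restrictCoords_surjective _ z
  have hy : W.mkQ y ∈ Submodule.span K ((W.mkQ ∘ b) '' T) := by
    refine Submodule.span_le.2 hT_span ?_
    rw [image_univ, range_comp, ← Submodule.map_span, b.span_eq, Submodule.map_top,
      Submodule.range_mkQ]
    trivial
  obtain ⟨l, hl, hly⟩ := (Finsupp.mem_span_image_iff_linearCombination K).1 hy
  refine ⟨y - Finsupp.linearCombination K b l, ?_, funext fun i => ?_⟩
  · rw [SetLike.mem_coe, ← W.ker_mkQ, LinearMap.mem_ker, map_sub,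
      LinearMap.map_finsupp_linearCombination, hly, sub_self]
  · have hi : (i : ι) ∉ T := by simpa using i.2
    rw [map_sub, Pi.sub_apply, b.restrictCoords_apply, b.restrictCoords_apply,
      b.repr_linearCombination, (Finsupp.mem_supported' K l).1 hl i hi, sub_zero]

end Coordinates

theorem Convex.exists_mem_image_mem_of_dense {V F : Type*} [AddCommGroup V] [Module ℝ V]
    [NormedAddCommGroup F] [NormedSpace ℝ F] [FiniteDimensional ℝ F] {C : Set V}
    (hC : Convex ℝ C) (hne : C.Nonempty) {π : V →ₗ[ℝ] F} (hπ : (vectorSpan ℝ C).map π = ⊤)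
    {D : Set F} (hD : Dense D) : ∃ c ∈ C, π c ∈ D := by
  have hspan : affineSpan ℝ (π '' C) = ⊤ := by
    rw [AffineSubspace.affineSpan_eq_top_iff_vectorSpan_eq_top_of_nonempty ℝ F F (hne.image π),
      ← hπ]
    exact (π.toAffineMap.map_vectorSpan).symm
  obtain ⟨_, ⟨c, hc, rfl⟩, hcD⟩ := (hD.inter_open_nonempty _ isOpen_interior
    ((hC.linear_image π).interior_nonempty_iff_affineSpan_eq_top.2 hspan)).mono
    (inter_subset_inter_left _ interior_subset)
  exact ⟨c, hc, hcD⟩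

section Subdifferential

variable {E : Type*} [NormedAddCommGroup E] [InnerProductSpace ℝ E] [FiniteDimensional ℝ E]

theorem exists_mem_subgradientGraph_restrictCoords_add_eq_ratCast {ι : Type*} [Fintype ι]
    (b : Basis ι ℝ E) {f : E → ℝ} {x : E} (hne : (subdifferential f x).Nonempty) :
    ∃ S : Finset ι, finrank ℝ (vectorSpan ℝ (subdifferential f x)) ≤ S.card ∧
      ∃ q : S → ℚ, ∃ u, (x, u) ∈ subgradientGraph f ∧
        b.restrictCoords S (x + u) = fun i => (q i : ℝ) := by
  let e : StrongDual ℝ E ≃ₗ[ℝ] E := (toDual ℝ E).symm.toLinearEquiv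
  obtain ⟨S, hS, hmap⟩ :=
    b.exists_finrank_le_card_map_restrictCoords_eq_top
      ((vectorSpan ℝ (subdifferential f x)).map (e : StrongDual ℝ E →ₗ[ℝ] E))
  rw [LinearEquiv.finrank_map_eq] at hS
  have hD : Dense ((b.restrictCoords S x + ·) ⁻¹' range fun q : S → ℚ => fun i => (q i : ℝ)) :=
    (DenseRange.piMap fun _ => Rat.denseRange_cast).preimage (isOpenMap_add_left _)
  obtain ⟨ℓ, hℓ, q, hq⟩ := (convex_subdifferential f x).exists_mem_image_mem_of_dense hne
    (π := b.restrictCoords S ∘ₗ e) (by rw [Submodule.map_comp, hmap]) hD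
  refine ⟨S, hS, q, e ℓ, fun y => ?_, by rw [map_add]; exact hq.symm⟩
  change f x + ⟪(toDual ℝ E).symm ℓ, y - x⟫ ≤ f y
  rw [toDual_symm_apply]
  exact hℓ y

theorem dimH_setOf_le_finrank_direction_subdifferential_le (f : E → ℝ) (k : ℕ) :
    dimH {x | k ≤ finrank ℝ (affineSpan ℝ (subdifferential f x)).direction}
      ≤ ((finrank ℝ E - k : ℕ) : ℝ≥0∞) := by
  rcases k.eq_zero_or_pos with rfl | hk
  · simpa using (dimH_mono (subset_univ _)).trans (Real.dimH_univ_eq_finrank E).le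
  let b := Module.finBasis ℝ E
  have hcover : {x | k ≤ finrank ℝ (affineSpan ℝ (subdifferential f x)).direction} ⊆
      ⋃ (S : Finset (Fin (finrank ℝ E))) (_ : k ≤ S.card) (q : S → ℚ),
        Prod.fst '' {p ∈ subgradientGraph f |
          p.1 + p.2 ∈ b.restrictCoords S ⁻¹' {fun i => (q i : ℝ)}} := by
    intro x hx
    replace hx : k ≤ finrank ℝ (vectorSpan ℝ (subdifferential f x)) := by
      rwa [← direction_affineSpan]
    have hne : (subdifferential f x).Nonempty := by
      by_contra h
      rw [not_nonempty_iff_eq_empty.1 h, vectorSpan_empty, finrank_bot] at hx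
      omega
    obtain ⟨S, hS, q, u, hu, hxu⟩ :=
      exists_mem_subgradientGraph_restrictCoords_add_eq_ratCast b hne
    simp only [mem_iUnion]
    exact ⟨S, hx.trans hS, q, (x, u), ⟨hu, hxu⟩, rfl⟩
  refine (dimH_mono hcover).trans ?_
  simp only [dimH_iUnion, iSup_le_iff]
  intro S hS q
  calc _ ≤ dimH (b.restrictCoords S ⁻¹' {fun i => (q i : ℝ)}) :=
        dimH_fst_le_of_monotone
          (fun _ hp _ hq => inner_sub_sub_nonneg_of_mem_subgradientGraph hp hq) _
    _ ≤ finrank ℝ (LinearMap.ker (b.restrictCoords S)) :=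
        dimH_preimage_singleton_le_finrank_ker _ _
    _ ≤ ((finrank ℝ E - k : ℕ) : ℝ≥0∞) := by
        rw [b.finrank_ker_restrictCoords, Fintype.card_fin]
        exact Nat.cast_le.2 (Nat.sub_le_sub_left hS _)

end Subdifferential

theorem stmt4_general (n k : ℕ) (f : EuclideanSpace ℝ (Fin n) → ℝ) :
    dimH {x : EuclideanSpace ℝ (Fin n) |
        k ≤ finrank ℝ (affineSpan ℝ
          {ℓ : EuclideanSpace ℝ (Fin n) →L[ℝ] ℝ | ∀ y, f x + ℓ (y - x) ≤ f y}).direction}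
      ≤ ((n - k : ℕ) : ℝ≥0∞) := by
  have h := dimH_setOf_le_finrank_direction_subdifferential_le f k
  rw [finrank_euclideanSpace_fin] at h
  exact h

/-- For a convex `f : ℝⁿ → ℝ` and `0 ≤ k ≤ n`, the set of points where the
subdifferential of `f` has dimension at least `k` has Hausdorff dimension
at most `n - k`. -/
theorem stmt4 (n k : ℕ) (hk : k ≤ n) (f : EuclideanSpace ℝ (Fin n) → ℝ)
    (hf : ConvexOn ℝ Set.univ f) :
    dimH {x : EuclideanSpace ℝ (Fin n) |
        k ≤ finrank ℝ (affineSpan ℝ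
          {ℓ : EuclideanSpace ℝ (Fin n) →L[ℝ] ℝ | ∀ y, f x + ℓ (y - x) ≤ f y}).direction}
      ≤ ((n - k : ℕ) : ℝ≥0∞) :=
  stmt4_general n k f
end

section
/- The set A_k = {x ∈ ℝⁿ : at least k coordinates of x are rational} has Hausdorff dimension n - k, and A_k intersects every convex subset of ℝⁿ of dimension at least k. -/
/-!
`A_k` is a countable union of coordinate slices `{x | x i = q i for i ∈ s}` with `#s ≥ k`, each
an affine subspace of dimension `n - #s`, and it contains one with `#s = k`; countable stability
of `dimH` gives `dimH A_k = n - k`.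

For a convex `C` of dimension `m ≥ k`, row rank equals column rank yields `m` coordinates on
which the direction of `C` projects onto `ℝᵐ`. The projection of `C` to these coordinates then
has nonempty interior, so it contains a point with rational coordinates.
-/

open Module Set
open scoped ENNReal

open Submodule in
/-- Take for `s` a maximal independent set of rows of the matrix whose columns are a basis
of `D`. -/
theorem Submodule.exists_card_eq_finrank_map_funLeft_eq_top {K ι : Type*} [Field K] [Finite ι]
    (D : Submodule K (ι → K)) :
    ∃ s : Set ι, Nat.card s = finrank K D ∧
      D.map (LinearMap.funLeft K K ((↑) : s → ι)) = ⊤ := by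
  let b := Module.finBasis K D
  let row : ι → Fin (finrank K D) → K := fun i j => (b j : ι → K) i
  have hrow : span K (range row) = ⊤ :=
    span_flip_eq_top_iff_linearIndependent.2 (b.linearIndependent.map' D.subtype D.ker_subtype)
  obtain ⟨s, -, -, hrow_s, hli⟩ :=
    exists_linearIndepOn_extension (linearIndepOn_empty K row) (empty_subset univ)
  have : Fintype s := Fintype.ofFinite s
  have hspan_s : span K (range fun i : s => row i) = ⊤ := by
    rw [eq_top_iff, ← hrow, span_le, ← image_univ]
    simpa [← image_eq_range] using hrow_s
  refine ⟨s, ?_, ?_⟩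
  · rw [Nat.card_eq_fintype_card, ← finrank_span_eq_card hli, hspan_s, finrank_top,
      finrank_fin_fun]
  · rw [eq_top_iff, ← span_flip_eq_top_iff_linearIndependent.2 hli, span_le]
    rintro _ ⟨j, rfl⟩
    exact mem_map_of_mem (b j).2

theorem LinearMap.dimH_preimage_singleton {E F : Type*} [NormedAddCommGroup E]
    [NormedSpace ℝ E] [FiniteDimensional ℝ E] [AddCommGroup F] [Module ℝ F]
    (f : E →ₗ[ℝ] F) (x : E) :
    dimH (f ⁻¹' {f x}) = finrank ℝ (LinearMap.ker f) := by
  have hfiber : f ⁻¹' {f x} = IsometryEquiv.subRight x ⁻¹' Set.range ((↑) : ker f → E) := by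
    ext y
    simp [sub_eq_zero]
  rw [hfiber, IsometryEquiv.dimH_preimage, ← image_univ, isometry_subtype_coe.dimH_image,
    Real.dimH_univ_eq_finrank]

theorem Convex.interior_image_nonempty_of_map_vectorSpan_eq_top {E F : Type*}
    [NormedAddCommGroup E] [NormedSpace ℝ E] [NormedAddCommGroup F] [NormedSpace ℝ F]
    [FiniteDimensional ℝ F] {C : Set E} (hC : Convex ℝ C) (hne : C.Nonempty) (f : E →ₗ[ℝ] F)
    (hf : (vectorSpan ℝ C).map f = ⊤) :
    (interior (f '' C)).Nonempty := by
  rw [(hC.linear_image f).interior_nonempty_iff_affineSpan_eq_top,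
    AffineSubspace.affineSpan_eq_top_iff_vectorSpan_eq_top_of_nonempty ℝ F F (hne.image f),
    ← direction_affineSpan, ← LinearMap.coe_toAffineMap, ← AffineSubspace.map_span,
    AffineSubspace.map_direction, direction_affineSpan]
  exact hf

variable {ι : Type*}

def rationalCoordSet (ι : Type*) (k : ℕ) : Set (EuclideanSpace ℝ ι) :=
  {x | ∃ s : Finset ι, k ≤ s.card ∧ ∀ i ∈ s, ∃ q : ℚ, x i = (q : ℝ)}

namespace EuclideanSpace

noncomputable def restrictₗ (s : Set ι) : EuclideanSpace ℝ ι →ₗ[ℝ] (s → ℝ) :=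
  LinearMap.funLeft ℝ ℝ ((↑) : s → ι) ∘ₗ (WithLp.linearEquiv 2 ℝ (ι → ℝ)).toLinearMap

@[simp]
theorem restrictₗ_apply (s : Set ι) (x : EuclideanSpace ℝ ι) (i : s) :
    restrictₗ s x i = x i :=
  rfl

theorem finrank_ker_restrictₗ [Fintype ι] (s : Set ι) :
    finrank ℝ (LinearMap.ker (restrictₗ s)) = Fintype.card ι - Nat.card s := by
  have hsurj : LinearMap.range (restrictₗ s) = ⊤ :=
    LinearMap.range_eq_top.2 <| (LinearMap.funLeft_surjective_of_injective ℝ ℝ _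
      Subtype.val_injective).comp (WithLp.linearEquiv 2 ℝ (ι → ℝ)).surjective
  have hrank := (restrictₗ s).finrank_range_add_finrank_ker
  classical
  rw [hsurj, finrank_top, finrank_euclideanSpace, Module.finrank_fintype_fun_eq_card,
    ← Nat.card_eq_fintype_card] at hrank
  omega

theorem dimH_setOf_forall_mem_eq [Fintype ι] (s : Finset ι) (q : ι → ℝ) :
    dimH {x : EuclideanSpace ℝ ι | ∀ i ∈ s, x i = q i} = (Fintype.card ι - s.card : ℕ) := by
  have hslice : {x : EuclideanSpace ℝ ι | ∀ i ∈ s, x i = q i} =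
      restrictₗ (s : Set ι) ⁻¹' {restrictₗ (s : Set ι) (WithLp.toLp 2 q)} := by
    ext x
    simp only [mem_preimage, mem_singleton_iff, funext_iff, restrictₗ_apply]
    simp [Subtype.forall]
  rw [hslice, LinearMap.dimH_preimage_singleton, finrank_ker_restrictₗ]
  simp

end EuclideanSpace

section

variable [Fintype ι]

open EuclideanSpace

theorem dimH_rationalCoordSet {k : ℕ} (hk : k ≤ Fintype.card ι) :
    dimH (rationalCoordSet ι k) = (Fintype.card ι - k : ℕ) := by
  apply le_antisymm
  · have hcover : rationalCoordSet ι k ⊆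
        ⋃ p : {s : Finset ι // k ≤ s.card} × (ι → ℚ),
          {x : EuclideanSpace ℝ ι | ∀ i ∈ p.1.1, x i = p.2 i} := by
      rintro x ⟨s, hks, hs⟩
      choose! q hq using hs
      exact mem_iUnion.2 ⟨(⟨s, hks⟩, q), hq⟩
    refine (dimH_mono hcover).trans ?_
    rw [dimH_iUnion]
    refine iSup_le fun p => ?_
    rw [dimH_setOf_forall_mem_eq]
    exact_mod_cast Nat.sub_le_sub_left p.1.2 _
  · obtain ⟨s, -, hs⟩ := Finset.exists_subset_card_eq (s := Finset.univ) (n := k) (by simpa)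
    have hslice : {x : EuclideanSpace ℝ ι | ∀ i ∈ s, x i = 0} ⊆ rationalCoordSet ι k :=
      fun x hx => ⟨s, hs.ge, fun i hi => ⟨0, by simpa using hx i hi⟩⟩
    simpa [dimH_setOf_forall_mem_eq, hs] using dimH_mono hslice

theorem rationalCoordSet_inter_nonempty {k : ℕ} {C : Set (EuclideanSpace ℝ ι)}
    (hC : Convex ℝ C) (hne : C.Nonempty) (hk : k ≤ finrank ℝ (vectorSpan ℝ C)) :
    (rationalCoordSet ι k ∩ C).Nonempty := by
  obtain ⟨s, hcard, hs⟩ := ((vectorSpan ℝ C).map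
    (WithLp.linearEquiv 2 ℝ (ι → ℝ)).toLinearMap).exists_card_eq_finrank_map_funLeft_eq_top
  have hrestrict : (vectorSpan ℝ C).map (restrictₗ s) = ⊤ := by
    rwa [restrictₗ, Submodule.map_comp]
  classical
  have hint := hC.interior_image_nonempty_of_map_vectorSpan_eq_top hne _ hrestrict
  obtain ⟨_, hy_rat, hy_int⟩ :=
    (dense_pi univ fun _ _ => Rat.denseRange_cast).exists_mem_open isOpen_interior hint
  obtain ⟨x, hxC, rfl⟩ := interior_subset hy_int
  refine ⟨x, ⟨s.toFinset, ?_, fun i hi => ?_⟩, hxC⟩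
  · rwa [← Nat.card_eq_card_toFinset, hcard, LinearEquiv.finrank_map_eq]
  · obtain ⟨q, hq⟩ := hy_rat ⟨i, mem_toFinset.1 hi⟩ (mem_univ _)
    exact ⟨q, hq.symm⟩

end

/-- The set `A_k` of points of `ℝⁿ` having at least `k` rational coordinates has
Hausdorff dimension `n - k`, and it meets every nonempty convex subset of `ℝⁿ`
of dimension at least `k`. -/
theorem stmt5 (n k : ℕ) (hk : k ≤ n) :
    dimH {x : EuclideanSpace ℝ (Fin n) |
        ∃ s : Finset (Fin n), k ≤ s.card ∧ ∀ i ∈ s, ∃ q : ℚ, x i = (q : ℝ)}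
      = ((n - k : ℕ) : ℝ≥0∞) ∧
    ∀ C : Set (EuclideanSpace ℝ (Fin n)), C.Nonempty → Convex ℝ C →
      k ≤ finrank ℝ (affineSpan ℝ C).direction →
      ({x : EuclideanSpace ℝ (Fin n) |
        ∃ s : Finset (Fin n), k ≤ s.card ∧ ∀ i ∈ s, ∃ q : ℚ, x i = (q : ℝ)} ∩ C).Nonempty := by
  have hdimH := dimH_rationalCoordSet (ι := Fin n) (k := k) (by simpa using hk)
  rw [Fintype.card_fin] at hdimH
  refine ⟨hdimH, fun C hne hC hdim => ?_⟩
  rw [direction_affineSpan] at hdim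
  exact rationalCoordSet_inter_nonempty hC hne hdim
end

section
/- Let E be a complete metrizable topological vector space (Fréchet space in the metric sense), A and D topological spaces with D compact, and suppose S : A × E → (compact subsets of a metric space K) is upper semi-continuous. Define O(D, ε, k) as the set of u ∈ E such that for every L ∈ D, S(L,u) is contained in the ε-neighborhood of some k-dimensional convex subset of K. Then O(D, ε, k) is open in E. -/
open Module Filter Topology

/-!
Let `u₀ ∈ O(D, ε, k)`. For each `L ∈ D` pick a witness `V`; by upper semi-continuity,
`S (L', u) ⊆ thickening ε V` is an open condition on `(L', u)`, so the same `V` works near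
`(L, u₀)`. The tube lemma over the compact set `D` turns these neighbourhoods of the points
`(L, u₀)` into a single neighbourhood of `u₀` contained in `O(D, ε, k)`.
-/

theorem IsCompact.isOpen_setOf_forall_exists_subset {A X K ι : Type*} [TopologicalSpace A]
    [TopologicalSpace X] [TopologicalSpace K] {S : A × X → Set K}
    (husc : ∀ U : Set K, IsOpen U → IsOpen {p | S p ⊆ U}) {D : Set A} (hD : IsCompact D)
    (P : ι → Prop) (U : ι → Set K) (hU : ∀ i, IsOpen (U i)) :
    IsOpen {u : X | ∀ L ∈ D, ∃ i, P i ∧ S (L, u) ⊆ U i} := by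
  refine isOpen_iff_eventually.2 fun u₀ hu₀ => hD.eventually_forall_of_forall_eventually ?_
  intro L hL
  obtain ⟨i, hi, hsub⟩ := hu₀ L hL
  have hnear : ∀ᶠ p : A × X in 𝓝 (L, u₀), S p ⊆ U i := (husc _ (hU i)).mem_nhds hsub
  exact (continuous_swap.tendsto (u₀, L)).eventually hnear |>.mono fun _ h => ⟨i, hi, h⟩

theorem stmt15_general (A : Type*) [TopologicalSpace A]
    (E : Type*) [UniformSpace E]
    (K : Type*) [NormedAddCommGroup K] [NormedSpace ℝ K]
    (S : A × E → Set K)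
    (husc : ∀ U : Set K, IsOpen U → IsOpen {p : A × E | S p ⊆ U})
    (D : Set A) (hD : IsCompact D) (ε : ℝ) (k : ℕ) :
    IsOpen {u : E | ∀ L ∈ D, ∃ V : Set K, Convex ℝ V ∧
      finrank ℝ (affineSpan ℝ V).direction ≤ k ∧
      S (L, u) ⊆ Metric.thickening ε V} := by
  simpa only [and_assoc] using hD.isOpen_setOf_forall_exists_subset husc
    (fun V : Set K => Convex ℝ V ∧ finrank ℝ (affineSpan ℝ V).direction ≤ k)
    (Metric.thickening ε) fun _ => Metric.isOpen_thickening

/-- If `S : A × E → compact subsets of K` is upper semi-continuous, `D ⊆ A` is compact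
and `E` is a completely metrizable topological vector space, then the set
`O(D, ε, k)` of `u ∈ E` such that for every `L ∈ D` the set `S (L, u)` lies in the
`ε`-neighborhood of some `k`-dimensional convex subset of `K`, is open in `E`. -/
theorem stmt15 (A : Type*) [TopologicalSpace A]
    (E : Type*) [UniformSpace E] [CompleteSpace E] [AddCommGroup E] [IsUniformAddGroup E]
      [Module ℝ E] [ContinuousSMul ℝ E] [TopologicalSpace.MetrizableSpace E]
    (K : Type*) [NormedAddCommGroup K] [NormedSpace ℝ K]
    (S : A × E → Set K) (hScp : ∀ p, IsCompact (S p))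
    (husc : ∀ U : Set K, IsOpen U → IsOpen {p : A × E | S p ⊆ U})
    (D : Set A) (hD : IsCompact D) (ε : ℝ) (hε : 0 < ε) (k : ℕ) :
    IsOpen {u : E | ∀ L ∈ D, ∃ V : Set K, Convex ℝ V ∧
      finrank ℝ (affineSpan ℝ V).direction ≤ k ∧
      S (L, u) ⊆ Metric.thickening ε V} :=
  stmt15_general A E K S husc D hD ε k
end
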